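/- Mādhava's value 2827433388233/900000000000 satisfies |2827433388233/900000000000 − π| < 10⁻¹¹; i.e., it approximates π accurately to 11 decimal places. -/

import Mathlib

theorem madhava_pi_value :
    |(2827433388233 / 900000000000 : ℝ) - Real.pi| < 1 / 10 ^ 11 := by
  rw [abs_sub_lt_iff]
  constructor <;> linarith [Real.pi_gt_d20, Real.pi_lt_d20]
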